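/- Let m be an odd integer with m ≥ 58 and let Ĝ be a connected graph attaining the maximum spectral radius among all graphs in 𝒢(m,H(4,3)) other than K_2 ∨ ((m−1)/2)K_1. Let u* be a vertex of maximum Perron-vector entry, U = N(u*), and W = V(Ĝ)∖(U∪{u*}). Then every vertex w ∈ W has degree d(w) ≥ 2 in Ĝ. -/

import Mathlib

/-!
Suppose some `w ∈ W` had a single neighbour `w'`, and rotate the pendant edge `ww'` into `u*w`.
The new graph still has `m` edges; it has no isolated vertex because, by connectivity, `w'` has
a second neighbour; it is `H(4,3)`-free because a vertex of degree one lies in no copy of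
`H(4,3)`; and it is not the book graph, whose minimum degree is two. At the Perron vector `x` the
quadratic form grows by `2 x_w (x_{u*} - x_{w'}) ≥ 0`, and equality of spectral radii would make
`x` an eigenvector of the new graph, which fails at the row of `u*`. So the new graph has a
strictly larger spectral radius, contradicting extremality.
-/

open Finset

/-- The spectral radius of a finite simple graph: the supremum of the real
spectrum of its adjacency matrix. -/
noncomputable def specRad {V : Type*} [Fintype V] [DecidableEq V] (G : SimpleGraph V) : ℝ :=
  letI := Classical.decRel G.Adj
  sSup (spectrum ℝ (SimpleGraph.adjMatrix ℝ G))

/-- The fish graph `H(4,3)`: a 4-cycle 0-1-2-3-0 and a triangle 0-4-5 sharing vertex 0. -/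
def H43 : SimpleGraph (Fin 6) :=
  SimpleGraph.fromEdgeSet {s(0, 1), s(1, 2), s(2, 3), s(3, 0), s(0, 4), s(4, 5), s(5, 0)}

/-- The bowtie graph `H(3,3)` (also `F₂`): two triangles 0-1-2 and 0-3-4 sharing vertex 0. -/
def H33 : SimpleGraph (Fin 5) :=
  SimpleGraph.fromEdgeSet {s(0, 1), s(1, 2), s(2, 0), s(0, 3), s(3, 4), s(4, 0)}

/-- `G` contains a (not necessarily induced) subgraph isomorphic to `H`. -/
def HasSubgraphCopy {W V : Type*} (H : SimpleGraph W) (G : SimpleGraph V) : Prop :=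
  ∃ f : W → V, Function.Injective f ∧ ∀ ⦃a b⦄, H.Adj a b → G.Adj (f a) (f b)

/-- `G` is `H`-free: it contains no subgraph isomorphic to `H`. -/
def GraphFree {W V : Type*} (H : SimpleGraph W) (G : SimpleGraph V) : Prop :=
  ¬ HasSubgraphCopy H G

/-- The book graph `K₂ ∨ k·K₁`, on vertices `Fin (k+2)`: vertices 0 and 1 form the `K₂`
and are joined to all of the `k` remaining independent vertices. -/
def bookGraph (k : ℕ) : SimpleGraph (Fin (k + 2)) where
  Adj x y := x ≠ y ∧ (x.val < 2 ∨ y.val < 2)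
  symm := ⟨fun _ _ h => ⟨h.1.symm, h.2.symm⟩⟩
  loopless := ⟨fun _ h => h.1 rfl⟩

/-- `S⁻`: the graph obtained from the book graph `K₂ ∨ k·K₁` by deleting one edge
incident to a vertex of degree two (the edge between vertices 1 and 2). -/
def bookMinus (k : ℕ) : SimpleGraph (Fin (k + 2)) where
  Adj x y := x ≠ y ∧ (x.val < 2 ∨ y.val < 2) ∧
    ¬(x.val = 1 ∧ y.val = 2) ∧ ¬(x.val = 2 ∧ y.val = 1)
  symm := by
    refine ⟨?_⟩
    rintro x y ⟨h1, h2, h3, h4⟩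
    exact ⟨h1.symm, h2.symm, fun h => h4 ⟨h.2, h.1⟩, fun h => h3 ⟨h.2, h.1⟩⟩
  loopless := ⟨fun _ h => h.1 rfl⟩

/-- The graph `K₁ ∨ (K_{1,t} ∪ 2K₁)` on `Fin (t+4)`: vertex 0 is the apex joined to all
other vertices, vertex 1 is the star center joined to the `t` leaves `4, …, t+3`,
and vertices 2, 3 are the two extra vertices (joined only to the apex). -/
def extGraph (t : ℕ) : SimpleGraph (Fin (t + 4)) where
  Adj x y := x ≠ y ∧ (x.val = 0 ∨ y.val = 0 ∨ (x.val = 1 ∧ 4 ≤ y.val) ∨ (y.val = 1 ∧ 4 ≤ x.val))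
  symm := by
    refine ⟨?_⟩
    rintro x y ⟨h1, h2⟩
    exact ⟨h1.symm, by tauto⟩
  loopless := ⟨fun _ h => h.1 rfl⟩

/-- The star `K_{1,r}` on `Fin (r+1)`, with center 0. -/
def starGraph (r : ℕ) : SimpleGraph (Fin (r + 1)) where
  Adj x y := x ≠ y ∧ (x.val = 0 ∨ y.val = 0)
  symm := ⟨fun _ _ h => ⟨h.1.symm, h.2.symm⟩⟩
  loopless := ⟨fun _ h => h.1 rfl⟩

/-- Membership in the family `𝒢(m, H(4,3))`: `H(4,3)`-free, `m` edges, no isolated vertices. -/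
def memFamily {V : Type*} [Fintype V] [DecidableEq V] (m : ℕ) (G : SimpleGraph V) : Prop :=
  GraphFree H43 G ∧ G.edgeSet.ncard = m ∧ ∀ v : V, ∃ w, G.Adj v w

/-- `e(S)`: the number of edges of `G` with both endpoints in `S`. -/
noncomputable def eIn {V : Type*} (G : SimpleGraph V) (S : Set V) : ℕ :=
  {e ∈ G.edgeSet | ∀ v ∈ e, v ∈ S}.ncard

/-- `e(S,T)`: the number of edges of `G` with one endpoint in `S` and the other in `T`. -/
noncomputable def eBetween {V : Type*} (G : SimpleGraph V) (S T : Set V) : ℕ :=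
  {e ∈ G.edgeSet | ∃ a ∈ S, ∃ b ∈ T, e = s(a, b)}.ncard

/-- `d_S(u)`: the number of neighbours of `u` inside `S`. -/
noncomputable def dIn {V : Type*} (G : SimpleGraph V) (S : Set V) (u : V) : ℕ :=
  (S ∩ G.neighborSet u).ncard

/-- `U = N(u)`. -/
def Uset {V : Type*} (G : SimpleGraph V) (u : V) : Set V := G.neighborSet u

/-- `W = V(G) \ (U ∪ {u})`. -/
def Wset {V : Type*} (G : SimpleGraph V) (u : V) : Set V :=
  Set.univ \ (G.neighborSet u ∪ {u})

/-- `U₀ = {v ∈ U : d_U(v) = 0}`. -/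
noncomputable def U0set {V : Type*} (G : SimpleGraph V) (u : V) : Set V :=
  {v ∈ G.neighborSet u | dIn G (G.neighborSet u) v = 0}

/-- `U₊ = U \ U₀`. -/
noncomputable def Uplusset {V : Type*} (G : SimpleGraph V) (u : V) : Set V :=
  {v ∈ G.neighborSet u | dIn G (G.neighborSet u) v ≠ 0}

/-- `G` attains the maximum spectral radius among all graphs in `𝒢(m, H(4,3))` other than
the book graph `K₂ ∨ ((m-1)/2)·K₁`. -/
def isExtremal {V : Type*} [Fintype V] [DecidableEq V] (m : ℕ) (G : SimpleGraph V) : Prop :=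
  memFamily m G ∧ ¬ Nonempty (G ≃g bookGraph ((m - 1) / 2)) ∧
    ∀ (n : ℕ) (H : SimpleGraph (Fin n)), memFamily m H →
      ¬ Nonempty (H ≃g bookGraph ((m - 1) / 2)) → specRad H ≤ specRad G

open Matrix

section Rayleigh

open scoped MatrixOrder

variable {n : Type*} [Fintype n] [DecidableEq n] {A : Matrix n n ℝ} {r : ℝ}

theorem Matrix.IsHermitian.posSemidef_algebraMap_sub (hA : A.IsHermitian)
    (hr : ∀ μ ∈ spectrum ℝ A, μ ≤ r) : (algebraMap ℝ (Matrix n n ℝ) r - A).PosSemidef :=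
  le_algebraMap_of_spectrum_le hr hA.isSelfAdjoint

theorem Matrix.dotProduct_algebraMap_sub_mulVec (y : n → ℝ) :
    star y ⬝ᵥ (algebraMap ℝ (Matrix n n ℝ) r - A) *ᵥ y = r * (y ⬝ᵥ y) - y ⬝ᵥ A *ᵥ y := by
  simp [Algebra.algebraMap_eq_smul_one, sub_mulVec, dotProduct_sub, smul_mulVec]

theorem Matrix.IsHermitian.dotProduct_mulVec_le (hA : A.IsHermitian)
    (hr : ∀ μ ∈ spectrum ℝ A, μ ≤ r) (y : n → ℝ) : y ⬝ᵥ A *ᵥ y ≤ r * (y ⬝ᵥ y) := by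
  have := (hA.posSemidef_algebraMap_sub hr).dotProduct_mulVec_nonneg y
  rw [dotProduct_algebraMap_sub_mulVec] at this
  linarith

theorem Matrix.IsHermitian.mulVec_eq_smul_of_dotProduct_mulVec_eq (hA : A.IsHermitian)
    (hr : ∀ μ ∈ spectrum ℝ A, μ ≤ r) {y : n → ℝ} (hy : y ⬝ᵥ A *ᵥ y = r * (y ⬝ᵥ y)) :
    A *ᵥ y = r • y := by
  have := ((hA.posSemidef_algebraMap_sub hr).dotProduct_mulVec_zero_iff y).mp
    (by rw [dotProduct_algebraMap_sub_mulVec, hy, sub_self])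
  rw [sub_mulVec, sub_eq_zero, Algebra.algebraMap_eq_smul_one, smul_mulVec, one_mulVec] at this
  exact this.symm

end Rayleigh

theorem Matrix.dotProduct_single_one_mulVec {n R : Type*} [Fintype n] [DecidableEq n]
    [NonAssocSemiring R] (x : n → R) (i j : n) : x ⬝ᵥ single i j (1 : R) *ᵥ x = x i * x j := by
  rw [single_mulVec, one_mul]
  exact dotProduct_single ..

section SpectralRadius

variable {V : Type*} [Fintype V] [DecidableEq V] (G : SimpleGraph V) [DecidableRel G.Adj]

theorem specRad_eq_sSup : specRad G = sSup (spectrum ℝ (G.adjMatrix ℝ)) := by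
  unfold specRad
  congr!

theorem le_specRad {μ : ℝ} (hμ : μ ∈ spectrum ℝ (G.adjMatrix ℝ)) : μ ≤ specRad G :=
  specRad_eq_sSup G ▸ le_csSup Matrix.finite_real_spectrum.bddAbove hμ

theorem dotProduct_adjMatrix_mulVec_le (x : V → ℝ) :
    x ⬝ᵥ G.adjMatrix ℝ *ᵥ x ≤ specRad G * (x ⬝ᵥ x) :=
  (G.isHermitian_adjMatrix ℝ).dotProduct_mulVec_le (fun _ ↦ le_specRad G) x

theorem adjMatrix_mulVec_eq_of_dotProduct_eq {x : V → ℝ}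
    (hx : x ⬝ᵥ G.adjMatrix ℝ *ᵥ x = specRad G * (x ⬝ᵥ x)) :
    G.adjMatrix ℝ *ᵥ x = specRad G • x :=
  (G.isHermitian_adjMatrix ℝ).mulVec_eq_smul_of_dotProduct_mulVec_eq (fun _ ↦ le_specRad G) hx

end SpectralRadius

theorem SimpleGraph.Iso.specRad_eq {V W : Type*} [Fintype V] [DecidableEq V] [Fintype W]
    [DecidableEq W] {G : SimpleGraph V} {H : SimpleGraph W} (e : G ≃g H) :
    specRad G = specRad H := by
  classical
  have hA : H.adjMatrix ℝ = Matrix.reindexAlgEquiv ℝ ℝ e.toEquiv (G.adjMatrix ℝ) := by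
    ext i j
    simp only [Matrix.coe_reindexAlgEquiv, reindex_apply, submatrix_apply,
      SimpleGraph.adjMatrix_apply]
    exact if_congr e.symm.map_adj_iff.symm rfl rfl
  rw [specRad_eq_sSup, specRad_eq_sSup, hA, AlgEquiv.spectrum_eq]

section Copies

variable {W V : Type*} {H : SimpleGraph W} {G G' : SimpleGraph V}

theorem apply_ne_of_subsingleton_neighborSet {f : W → V} (hf : Function.Injective f)
    (hadj : ∀ ⦃a b⦄, H.Adj a b → G.Adj (f a) (f b)) {i : W} (hi : (H.neighborSet i).Nontrivial)
    {v : V} (hv : (G.neighborSet v).Subsingleton) : f i ≠ v := by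
  rintro rfl
  obtain ⟨a, ha, b, hb, hab⟩ := hi
  exact hab (hf (hv (hadj ha) (hadj hb)))

theorem HasSubgraphCopy.of_adj_of_ne (hH : ∀ i, (H.neighborSet i).Nontrivial) {v : V}
    (hv : (G'.neighborSet v).Subsingleton) (hGG' : ∀ a b, G'.Adj a b → a ≠ v → b ≠ v → G.Adj a b)
    (hcopy : HasSubgraphCopy H G') : HasSubgraphCopy H G := by
  obtain ⟨f, hf, hadj⟩ := hcopy
  have hne i : f i ≠ v := apply_ne_of_subsingleton_neighborSet hf hadj (hH i) hv
  exact ⟨f, hf, fun a b hab ↦ hGG' _ _ (hadj hab) (hne a) (hne b)⟩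

end Copies

theorem HasSubgraphCopy.of_iso {U V W : Type*} {H : SimpleGraph U} {G : SimpleGraph V}
    {G' : SimpleGraph W} (e : G ≃g G') (hcopy : HasSubgraphCopy H G') : HasSubgraphCopy H G := by
  obtain ⟨f, hf, hadj⟩ := hcopy
  exact ⟨e.symm ∘ f, e.symm.injective.comp hf, fun a b hab ↦ e.symm.map_adj_iff.mpr (hadj hab)⟩

theorem H43_neighborSet_nontrivial (i : Fin 6) : (H43.neighborSet i).Nontrivial := by
  fin_cases i
  · exact ⟨1, by simp [H43], 3, by simp [H43], by decide⟩
  · exact ⟨0, by simp [H43], 2, by simp [H43], by decide⟩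
  · exact ⟨1, by simp [H43], 3, by simp [H43], by decide⟩
  · exact ⟨2, by simp [H43], 0, by simp [H43], by decide⟩
  · exact ⟨0, by simp [H43], 5, by simp [H43], by decide⟩
  · exact ⟨0, by simp [H43], 4, by simp [H43], by decide⟩

theorem bookGraph_neighborSet_nontrivial {k : ℕ} (hk : 1 ≤ k) (v : Fin (k + 2)) :
    ((bookGraph k).neighborSet v).Nontrivial := by
  have hadj (a : Fin (k + 2)) (ha : a.val < 2) (hav : a ≠ v) : (bookGraph k).Adj v a :=
    ⟨hav.symm, Or.inr ha⟩
  by_cases hv : v.val < 2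
  · refine ⟨⟨1 - v.val, by omega⟩, hadj _ ?_ ?_, ⟨2, by omega⟩, ⟨?_, Or.inl hv⟩, ?_⟩ <;>
      (simp only [ne_eq, Fin.ext_iff]; omega)
  · refine ⟨⟨0, by omega⟩, hadj _ ?_ ?_, ⟨1, by omega⟩, hadj _ ?_ ?_, ?_⟩ <;>
      (simp only [ne_eq, Fin.ext_iff]; omega)

theorem not_nonempty_iso_bookGraph {V : Type*} {G : SimpleGraph V} {k : ℕ} (hk : 1 ≤ k) {v : V}
    (hv : (G.neighborSet v).Subsingleton) : ¬ Nonempty (G ≃g bookGraph k) := by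
  rintro ⟨χ⟩
  refine apply_ne_of_subsingleton_neighborSet χ.symm.injective (fun a b ↦ χ.symm.map_adj_iff.mpr)
    (bookGraph_neighborSet_nontrivial hk (χ v)) hv ?_
  exact χ.symm_apply_apply v

theorem SimpleGraph.Walk.mem_of_adj_closed {V : Type*} {G : SimpleGraph V} {S : Set V}
    (hS : ∀ a b, a ∈ S → G.Adj a b → b ∈ S) {a b : V} (p : G.Walk a b) (ha : a ∈ S) : b ∈ S := by
  induction p with
  | nil => exact ha
  | cons h _ ih => exact ih (hS _ _ ha h)

theorem SimpleGraph.Connected.exists_adj_ne_of_neighborSet_eq {V : Type*} {G : SimpleGraph V}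
    (hG : G.Connected) {w w' : V} (hw : G.neighborSet w = {w'}) (hE : 1 < G.edgeSet.ncard) :
    ∃ z, G.Adj w' z ∧ z ≠ w := by
  by_contra! hw'
  have hclosed : ∀ a b, a ∈ ({w, w'} : Set V) → G.Adj a b → b ∈ ({w, w'} : Set V) := by
    rintro a b (rfl | rfl) hab
    · exact Or.inr (hw ▸ hab : b ∈ ({w'} : Set V))
    · exact Or.inl (hw' b hab)
  have hV (v : V) : v ∈ ({w, w'} : Set V) := (hG.preconnected w v).some.mem_of_adj_closed hclosed
    (Or.inl rfl)
  have hsub : G.edgeSet ⊆ {s(w, w')} := by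
    rintro ⟨a, b⟩ hab
    rcases hV a with rfl | rfl <;> rcases hV b with rfl | rfl
    · exact absurd hab (G.loopless.irrefl _)
    · rfl
    · exact Sym2.eq_swap
    · exact absurd hab (G.loopless.irrefl _)
  have := Set.ncard_le_ncard hsub
  rw [Set.ncard_singleton] at this
  omega

namespace SimpleGraph

variable {V : Type*} (G : SimpleGraph V) (w w' u : V)

/-- The edge `ww'` of `G` rotated about `w` into `wu`. -/
def rotateEdge : SimpleGraph V := G \ edge w w' ⊔ edge w u

instance [DecidableEq V] [DecidableRel G.Adj] : DecidableRel (G.rotateEdge w w' u).Adj :=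
  inferInstanceAs (DecidableRel (G \ edge w w' ⊔ edge w u).Adj)

variable {G w w' u}

theorem rotateEdge_adj {a b : V} : (G.rotateEdge w w' u).Adj a b ↔
    G.Adj a b ∧ ¬ (a = w ∧ b = w' ∨ a = w' ∧ b = w) ∨ (a = w ∧ b = u ∨ a = u ∧ b = w) ∧ a ≠ b := by
  simp only [rotateEdge, sup_adj, sdiff_adj, edge_adj]
  have := G.ne_of_adj (a := a) (b := b)
  tauto

theorem neighborSet_rotateEdge (hw : G.neighborSet w = {w'}) (hu : u ≠ w) :
    (G.rotateEdge w w' u).neighborSet w = {u} := by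
  ext b
  have : G.Adj w b ↔ b = w' := Set.ext_iff.mp hw b
  simp only [mem_neighborSet, rotateEdge_adj, this, Set.mem_singleton_iff]
  aesop

theorem edgeSet_rotateEdge (hu : u ≠ w) :
    (G.rotateEdge w w' u).edgeSet = insert s(w, u) (G.edgeSet \ {s(w, w')}) := by
  ext ⟨a, b⟩
  simp only [mem_edgeSet, rotateEdge_adj, Set.mem_insert_iff, Set.mem_sdiff, Set.mem_singleton_iff,
    Sym2.eq_iff]
  aesop

theorem ncard_edgeSet_rotateEdge [Finite V] (hww' : G.Adj w w') (hwu : ¬ G.Adj w u) (hu : u ≠ w) :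
    (G.rotateEdge w w' u).edgeSet.ncard = G.edgeSet.ncard := by
  have hmem : s(w, w') ∈ G.edgeSet := hww'
  rw [edgeSet_rotateEdge hu, Set.ncard_insert_of_notMem (fun h ↦ hwu h.1),
    Set.ncard_sdiff_singleton_of_mem hmem]
  have := (Set.ncard_pos (Set.toFinite _)).mpr ⟨_, hmem⟩
  omega

theorem adj_of_rotateEdge_adj {a b : V} (h : (G.rotateEdge w w' u).Adj a b) (ha : a ≠ w)
    (hb : b ≠ w) : G.Adj a b := by
  rcases rotateEdge_adj.mp h with h | ⟨⟨rfl, -⟩ | ⟨-, rfl⟩, -⟩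
  exacts [h.1, absurd rfl ha, absurd rfl hb]

end SimpleGraph

open SimpleGraph in
theorem memFamily.rotateEdge {V : Type*} [Fintype V] [DecidableEq V] {G : SimpleGraph V}
    {w w' u : V} {m : ℕ} (hG : memFamily m G)
    (hw : G.neighborSet w = {w'}) (hwu : ¬ G.Adj w u) (hu : u ≠ w) (hw' : ∃ z, G.Adj w' z ∧ z ≠ w) :
    memFamily m (G.rotateEdge w w' u) := by
  obtain ⟨hfree, hcard, hnoiso⟩ := hG
  have hww' : G.Adj w w' := (Set.ext_iff.mp hw w').mpr rfl
  have hleaf : ((G.rotateEdge w w' u).neighborSet w).Subsingleton := by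
    rw [neighborSet_rotateEdge hw hu]
    exact Set.subsingleton_singleton
  refine ⟨fun hcopy ↦ hfree (hcopy.of_adj_of_ne H43_neighborSet_nontrivial hleaf
    fun a b h ha hb ↦ adj_of_rotateEdge_adj h ha hb), ?_, fun v ↦ ?_⟩
  · rw [ncard_edgeSet_rotateEdge hww' hwu hu, hcard]
  by_cases hvw : v = w
  · exact ⟨u, rotateEdge_adj.mpr (Or.inr ⟨Or.inl ⟨hvw, rfl⟩, hvw ▸ hu.symm⟩)⟩
  by_cases hvw' : v = w'
  · obtain ⟨z, hz, hzw⟩ := hw'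
    refine ⟨z, rotateEdge_adj.mpr (Or.inl ⟨hvw' ▸ hz, ?_⟩)⟩
    rintro (⟨rfl, -⟩ | ⟨-, rfl⟩)
    exacts [hvw rfl, hzw rfl]
  · obtain ⟨y, hy⟩ := hnoiso v
    have hyw : y ≠ w := by
      rintro rfl
      exact hvw' ((Set.ext_iff.mp hw v).mp hy.symm)
    refine ⟨y, rotateEdge_adj.mpr (Or.inl ⟨hy, ?_⟩)⟩
    rintro (⟨rfl, -⟩ | ⟨-, rfl⟩)
    exacts [hvw rfl, hyw rfl]

namespace SimpleGraph

variable {V : Type*} [DecidableEq V] {G : SimpleGraph V} [DecidableRel G.Adj] {w w' u : V}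

theorem adjMatrix_rotateEdge (hww' : G.Adj w w') (hwu : ¬ G.Adj w u) (hu : u ≠ w) :
    (G.rotateEdge w w' u).adjMatrix ℝ = G.adjMatrix ℝ - single w w' 1 - single w' w 1
      + single w u 1 + single u w 1 := by
  ext a b
  simp only [adjMatrix_apply, rotateEdge_adj, Matrix.add_apply, Matrix.sub_apply, single_apply]
  have hww : w ≠ w' := hww'.ne
  have hw'w : G.Adj w' w := hww'.symm
  have huw' : u ≠ w' := fun h ↦ hwu (h ▸ hww')
  have huw : ¬ G.Adj u w := fun h ↦ hwu h.symm
  grind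

variable [Fintype V]

theorem dotProduct_adjMatrix_rotateEdge_mulVec (hww' : G.Adj w w') (hwu : ¬ G.Adj w u)
    (hu : u ≠ w) (x : V → ℝ) :
    x ⬝ᵥ (G.rotateEdge w w' u).adjMatrix ℝ *ᵥ x
      = x ⬝ᵥ G.adjMatrix ℝ *ᵥ x + 2 * x w * (x u - x w') := by
  rw [adjMatrix_rotateEdge hww' hwu hu]
  simp only [add_mulVec, sub_mulVec, dotProduct_add, dotProduct_sub,
    dotProduct_single_one_mulVec]
  ring

theorem adjMatrix_rotateEdge_mulVec_apply (hww' : G.Adj w w') (hwu : ¬ G.Adj w u) (hu : u ≠ w)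
    (x : V → ℝ) :
    ((G.rotateEdge w w' u).adjMatrix ℝ *ᵥ x) u = (G.adjMatrix ℝ *ᵥ x) u + x w := by
  have hu' : u ≠ w' := fun h ↦ hwu (h ▸ hww')
  rw [adjMatrix_rotateEdge hww' hwu hu]
  simp [add_mulVec, sub_mulVec, single_mulVec, hu, hu']

theorem specRad_lt_specRad_rotateEdge (hww' : G.Adj w w') (hwu : ¬ G.Adj w u) (hu : u ≠ w)
    {x : V → ℝ} (hx : G.adjMatrix ℝ *ᵥ x = specRad G • x) (hxw : 0 < x w) (hxu : x w' ≤ x u) :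
    specRad G < specRad (G.rotateEdge w w' u) := by
  have hxx : 0 < x ⬝ᵥ x := by
    simpa using dotProduct_self_star_pos_iff.mpr fun h ↦ hxw.ne' (congrFun h w)
  have hlow : specRad G * (x ⬝ᵥ x) ≤ x ⬝ᵥ (G.rotateEdge w w' u).adjMatrix ℝ *ᵥ x := by
    rw [dotProduct_adjMatrix_rotateEdge_mulVec hww' hwu hu, hx, dotProduct_smul, smul_eq_mul]
    nlinarith
  have hup := dotProduct_adjMatrix_mulVec_le (G.rotateEdge w w' u) x
  refine (le_of_mul_le_mul_right (hlow.trans hup) hxx).lt_of_ne fun heq ↦ hxw.ne' ?_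
  have hrow := congrFun (adjMatrix_mulVec_eq_of_dotProduct_eq _ (hup.antisymm (heq ▸ hlow))) u
  rw [adjMatrix_rotateEdge_mulVec_apply hww' hwu hu, hx, ← heq] at hrow
  simpa using hrow

end SimpleGraph

theorem memFamily.of_iso {V W : Type*} [Fintype V] [DecidableEq V] [Fintype W] [DecidableEq W]
    {m : ℕ} {G : SimpleGraph V} {H : SimpleGraph W} (e : G ≃g H) (hG : memFamily m G) :
    memFamily m H := by
  obtain ⟨hfree, hcard, hnoiso⟩ := hG
  refine ⟨fun hcopy ↦ hfree (hcopy.of_iso e), ?_, fun v ↦ ?_⟩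
  · rw [← hcard, ← Nat.card_coe_set_eq, ← Nat.card_coe_set_eq, Nat.card_congr e.mapEdgeSet]
  · obtain ⟨z, hz⟩ := hnoiso (e.symm v)
    exact ⟨e z, by simpa using e.map_adj_iff.mpr hz⟩

theorem isExtremal.specRad_le {V W : Type*} [Fintype V] [DecidableEq V] [Fintype W]
    [DecidableEq W] {m : ℕ} {G : SimpleGraph V} (hG : isExtremal m G) {H : SimpleGraph W}
    (hH : memFamily m H) (hbook : ¬ Nonempty (H ≃g bookGraph ((m - 1) / 2))) :
    specRad H ≤ specRad G := by
  let φ := SimpleGraph.Iso.map (Fintype.equivFin W) H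
  rw [φ.specRad_eq]
  exact hG.2.2 _ _ (hH.of_iso φ) fun ⟨ψ⟩ ↦ hbook ⟨φ.trans ψ⟩

theorem stmt_8_general {V : Type*} [Fintype V] [DecidableEq V] (m : ℕ) (hm : 58 ≤ m)
    (Ghat : SimpleGraph V) [DecidableRel Ghat.Adj] (hconn : Ghat.Connected)
    (hext : isExtremal m Ghat)
    (x : V → ℝ) (hpos : ∀ v, 0 < x v)
    (heig : (SimpleGraph.adjMatrix ℝ Ghat).mulVec x = specRad Ghat • x)
    (ustar : V) (hmaxx : ∀ v, x v ≤ x ustar) :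
    ∀ w ∈ Wset Ghat ustar, 2 ≤ (Ghat.neighborSet w).ncard := by
  intro w hw
  have hwu : ¬ Ghat.Adj w ustar := fun h ↦ hw.2 (Or.inl h.symm)
  have huw : ustar ≠ w := fun h ↦ hw.2 (Or.inr h.symm)
  by_contra! hdeg
  obtain ⟨w', hww'⟩ := hext.1.2.2 w
  have hleaf : Ghat.neighborSet w = {w'} :=
    (Set.ncard_le_one_iff_subsingleton.mp (by omega)).eq_singleton_of_mem hww'
  have hbranch := hconn.exists_adj_ne_of_neighborSet_eq hleaf (by rw [hext.1.2.1]; omega)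
  have hnotbook : ¬ Nonempty (Ghat.rotateEdge w w' ustar ≃g bookGraph ((m - 1) / 2)) :=
    not_nonempty_iso_bookGraph (by omega)
      (SimpleGraph.neighborSet_rotateEdge hleaf huw ▸ Set.subsingleton_singleton)
  exact (hext.specRad_le (hext.1.rotateEdge hleaf hwu huw hbranch) hnotbook).not_gt
    (SimpleGraph.specRad_lt_specRad_rotateEdge hww' hwu huw heig (hpos w) (hmaxx w'))

/-- For odd `m ≥ 58`, if `Ĝ` is a connected spectral-extremal graph in
`𝒢(m,H(4,3)) \ {K₂ ∨ ((m-1)/2)K₁}`, then every vertex `w ∈ W` has degree at least 2. -/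
theorem stmt_8 {V : Type*} [Fintype V] [DecidableEq V] (m : ℕ) (hm : 58 ≤ m) (hodd : Odd m)
    (Ghat : SimpleGraph V) [DecidableRel Ghat.Adj] (hconn : Ghat.Connected)
    (hext : isExtremal m Ghat)
    (x : V → ℝ) (hpos : ∀ v, 0 < x v) (hunit : ∑ v : V, x v ^ 2 = 1)
    (heig : (SimpleGraph.adjMatrix ℝ Ghat).mulVec x = specRad Ghat • x)
    (ustar : V) (hmaxx : ∀ v, x v ≤ x ustar) :
    ∀ w ∈ Wset Ghat ustar, 2 ≤ (Ghat.neighborSet w).ncard :=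
  stmt_8_general m hm Ghat hconn hext x hpos heig ustar hmaxx
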